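/- Under the stated assumptions, the relaxation step is an L¹-contraction between density profiles: if ρ, σ : ℝ → ∏_{j=1}^M [0,R_j] are measurable functions such that ρ_j − σ_j is integrable for every j, then ∑_{j=1}^M ∫_ℝ |T_j(ρ(x)) − T_j(σ(x))| dx ≤ ∑_{j=1}^M ∫_ℝ |ρ_j(x) − σ_j(x)| dx. (This is the L¹ stability estimate (FL2) in the proof of Lemma 3.2 for the source splitting step.) -/

import Mathlib

/-!
On the box of admissible densities the relaxation step `T` is order preserving: each flux
`S_j` is nondecreasing in its upstream and nonincreasing in its downstream density, and the
restriction `Δt ≤ τ / (2𝒮)` keeps `T_j` nondecreasing in the lane's own density `ρ_j`. It also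
conserves the total mass `∑ⱼ ρⱼ`, because the exchange terms telescope and `S_0 = S_M = 0`.
By the Crandall–Tartar argument, comparing `T ρ` and `T σ` with `T (ρ ⊓ σ)`, such a map is an
`ℓ¹`-contraction pointwise in `x`, and integrating over `x` gives the estimate.
-/

open Set MeasureTheory

/-- Derivative-free form of `0 ≤ ∂₁F ≤ 𝒮` on `A` and `-𝒮 ≤ ∂₂F ≤ 0` on `B`. -/
structure FluxBounds (𝒮 : ℝ) (A B : Set ℝ) (F : ℝ → ℝ → ℝ) : Prop where
  monotoneOn_left : ∀ w ∈ B, MonotoneOn (F · w) A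
  antitoneOn_left_sub : ∀ w ∈ B, AntitoneOn (fun u => F u w - 𝒮 * u) A
  antitoneOn_right : ∀ u ∈ A, AntitoneOn (F u ·) B
  monotoneOn_right_add : ∀ u ∈ A, MonotoneOn (fun w => F u w + 𝒮 * w) B

theorem FluxBounds.zero {𝒮 : ℝ} (h𝒮 : 0 ≤ 𝒮) (A B : Set ℝ) : FluxBounds 𝒮 A B 0 where
  monotoneOn_left _ _ := monotoneOn_const
  antitoneOn_left_sub _ _ _ _ _ _ h := by simp only [Pi.zero_apply]; nlinarith
  antitoneOn_right _ _ := antitoneOn_const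
  monotoneOn_right_add _ _ _ _ _ _ h := by simp only [Pi.zero_apply]; nlinarith

theorem monotoneOn_and_antitoneOn_sub_of_deriv_mem_Icc {f : ℝ → ℝ} {D : Set ℝ} {K : ℝ}
    (hD : Convex ℝ D) (hf : Differentiable ℝ f) (hf' : ∀ x ∈ D, deriv f x ∈ Icc 0 K) :
    MonotoneOn f D ∧ AntitoneOn (fun x => f x - K * x) D := by
  have hg : Differentiable ℝ (fun x => f x - K * x) := hf.sub (differentiable_id.const_mul K)
  refine ⟨monotoneOn_of_deriv_nonneg hD hf.continuous.continuousOn hf.differentiableOn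
    fun x hx => (hf' x (interior_subset hx)).1, antitoneOn_of_deriv_nonpos hD
    hg.continuous.continuousOn hg.differentiableOn fun x hx => ?_⟩
  have hd : HasDerivAt (fun y => f y - K * y) (deriv f x - K) x := by
    simpa using (hf x).hasDerivAt.fun_sub ((hasDerivAt_id' x).const_mul K)
  simpa [hd.deriv] using (hf' x (interior_subset hx)).2

theorem antitoneOn_and_monotoneOn_add_of_deriv_mem_Icc {f : ℝ → ℝ} {D : Set ℝ} {K : ℝ}
    (hD : Convex ℝ D) (hf : Differentiable ℝ f) (hf' : ∀ x ∈ D, deriv f x ∈ Icc (-K) 0) :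
    AntitoneOn f D ∧ MonotoneOn (fun x => f x + K * x) D := by
  have hg : Differentiable ℝ (fun x => f x + K * x) := hf.add (differentiable_id.const_mul K)
  refine ⟨antitoneOn_of_deriv_nonpos hD hf.continuous.continuousOn hf.differentiableOn
    fun x hx => (hf' x (interior_subset hx)).2, monotoneOn_of_deriv_nonneg hD
    hg.continuous.continuousOn hg.differentiableOn fun x hx => ?_⟩
  have hd : HasDerivAt (fun y => f y + K * y) (deriv f x + K) x := by
    simpa using (hf x).hasDerivAt.fun_add ((hasDerivAt_id' x).const_mul K)
  simpa [hd.deriv, neg_le_iff_add_nonneg] using (hf' x (interior_subset hx)).1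

theorem FluxBounds.of_contDiff {𝒮 : ℝ} {A B : Set ℝ} {F : ℝ → ℝ → ℝ} (hA : Convex ℝ A)
    (hB : Convex ℝ B) (hF : ContDiff ℝ 1 (Function.uncurry F))
    (hF₁ : ∀ u ∈ A, ∀ w ∈ B, deriv (fun u' => F u' w) u ∈ Icc 0 𝒮)
    (hF₂ : ∀ u ∈ A, ∀ w ∈ B, deriv (fun w' => F u w') w ∈ Icc (-𝒮) 0) :
    FluxBounds 𝒮 A B F := by
  have hdiff := hF.differentiable one_ne_zero
  have left (w : ℝ) (hw : w ∈ B) := monotoneOn_and_antitoneOn_sub_of_deriv_mem_Icc hA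
    (hdiff.comp (differentiable_id.prodMk (differentiable_const w))) fun u hu => hF₁ u hu w hw
  have right (u : ℝ) (hu : u ∈ A) := antitoneOn_and_monotoneOn_add_of_deriv_mem_Icc hB
    (hdiff.comp ((differentiable_const u).prodMk differentiable_id)) fun w hw => hF₂ u hu w hw
  exact ⟨fun w hw => (left w hw).1, fun w hw => (left w hw).2, fun u hu => (right u hu).1,
    fun u hu => (right u hu).2⟩

theorem FluxBounds.lane_update_le {𝒮 c : ℝ} {A B C : Set ℝ} {F G : ℝ → ℝ → ℝ}
    (hF : FluxBounds 𝒮 A B F) (hG : FluxBounds 𝒮 B C G) (hc : 0 ≤ c) (hc𝒮 : c * (2 * 𝒮) ≤ 1)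
    {a a' b b' d d' : ℝ} (ha' : a' ∈ A) (ha : a ∈ A) (hb' : b' ∈ B) (hb : b ∈ B)
    (hd' : d' ∈ C) (hd : d ∈ C) (haa : a' ≤ a) (hbb : b' ≤ b) (hdd : d' ≤ d) :
    b' + c * (F a' b' - G b' d') ≤ b + c * (F a b - G b d) := by
  have hF₁ := hF.monotoneOn_left b hb ha' ha haa
  have hF₂ := hF.monotoneOn_right_add a' ha' hb' hb hbb
  have hG₁ := hG.antitoneOn_left_sub d hd hb' hb hbb
  have hG₂ := hG.antitoneOn_right b' hb' hd' hd hdd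
  simp only at hF₂ hG₁
  -- the slope in the lane's own density `b` is at least `1 - 2 c 𝒮 ≥ 0`
  nlinarith [mul_nonneg hc (sub_nonneg.2 hbb)]

/-- Crandall–Tartar: compare both `T p` and `T q` with `T (p ⊓ q)`. -/
theorem sum_abs_sub_le_of_monotone_of_sum_eq {ι : Type*} (s : Finset ι) {D : Set (ι → ℝ)}
    (hD : InfClosed D) {T : (ι → ℝ) → ι → ℝ}
    (hmono : ∀ p ∈ D, ∀ q ∈ D, q ≤ p → ∀ j ∈ s, T q j ≤ T p j)
    (hmass : ∀ p ∈ D, ∑ j ∈ s, T p j = ∑ j ∈ s, p j) {p q : ι → ℝ} (hp : p ∈ D) (hq : q ∈ D) :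
    ∑ j ∈ s, |T p j - T q j| ≤ ∑ j ∈ s, |p j - q j| := by
  have hm := hD hp hq
  calc ∑ j ∈ s, |T p j - T q j|
      ≤ ∑ j ∈ s, ((T p j - T (p ⊓ q) j) + (T q j - T (p ⊓ q) j)) := by
        refine Finset.sum_le_sum fun j hj => ?_
        have hpm := hmono p hp _ hm inf_le_left j hj
        have hqm := hmono q hq _ hm inf_le_right j hj
        exact abs_le.2 ⟨by linarith, by linarith⟩
    _ = ∑ j ∈ s, (p j + q j - 2 * (p ⊓ q) j) := by
        simp only [Finset.sum_add_distrib, Finset.sum_sub_distrib, ← Finset.mul_sum, hmass _ hp,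
          hmass _ hq, hmass _ hm]
        ring
    _ = ∑ j ∈ s, |p j - q j| := Finset.sum_congr rfl fun j _ => by
        rcases le_total (p j) (q j) with h | h
        · rw [Pi.inf_apply, inf_of_le_left h, abs_of_nonpos (by linarith)]; ring
        · rw [Pi.inf_apply, inf_of_le_right h, abs_of_nonneg (by linarith)]; ring

theorem sum_integral_abs_le_of_sum_abs_le {α ι : Type*} [MeasurableSpace α] {μ : Measure α}
    (s : Finset ι) {f g : ι → α → ℝ} (hf : ∀ i ∈ s, AEStronglyMeasurable (f i) μ)
    (hg : ∀ i ∈ s, Integrable (g i) μ) (hfg : ∀ x, ∑ i ∈ s, |f i x| ≤ ∑ i ∈ s, |g i x|) :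
    ∑ i ∈ s, ∫ x, |f i x| ∂μ ≤ ∑ i ∈ s, ∫ x, |g i x| ∂μ := by
  have hG : Integrable (fun x => ∑ i ∈ s, |g i x|) μ :=
    integrable_finsetSum _ fun i hi => (hg i hi).abs
  have hfi : ∀ i ∈ s, Integrable (fun x => |f i x|) μ := fun i hi =>
    (hG.mono' (hf i hi) (Filter.Eventually.of_forall fun x => (Real.norm_eq_abs _).trans_le <|
      (Finset.single_le_sum (fun j _ => abs_nonneg (f j x)) hi).trans (hfg x))).abs
  rw [← integral_finsetSum _ hfi, ← integral_finsetSum _ fun i hi => (hg i hi).abs]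
  exact integral_mono (integrable_finsetSum _ hfi) hG hfg

theorem Finset.sum_Icc_one_sub_telescope {G : Type*} [AddCommGroup G] (M : ℕ) (f : ℕ → G) :
    ∑ j ∈ Finset.Icc 1 M, (f (j - 1) - f j) = f 0 - f M := by
  rw [← Finset.Ico_add_one_right_eq_Icc, ← zero_add 1, ← Finset.sum_Ico_add',
    ← Finset.range_eq_Ico]
  simpa using Finset.sum_range_sub' f M

/-- The relaxation step `T` with `c = Δt / τ`; at `j = 1` the truncated index `j - 1 = 0` selects
the vanishing flux `S 0`. -/
def relaxationStep (S : ℕ → ℝ → ℝ → ℝ) (c : ℝ) (p : ℕ → ℝ) (j : ℕ) : ℝ :=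
  p j + c * (S (j - 1) (p (j - 1)) (p j) - S j (p j) (p (j + 1)))

theorem sum_relaxationStep {M : ℕ} {S : ℕ → ℝ → ℝ → ℝ} (hS0 : ∀ u w, S 0 u w = 0)
    (hSM : ∀ u w, S M u w = 0) (c : ℝ) (p : ℕ → ℝ) :
    ∑ j ∈ Finset.Icc 1 M, relaxationStep S c p j = ∑ j ∈ Finset.Icc 1 M, p j := by
  let Φ k := S k (p k) (p (k + 1))
  have hΦ : ∀ j ∈ Finset.Icc 1 M, relaxationStep S c p j = p j + c * (Φ (j - 1) - Φ j) :=
    fun j hj => by simp only [Φ, relaxationStep, Nat.sub_add_cancel (Finset.mem_Icc.1 hj).1]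
  rw [Finset.sum_congr rfl hΦ, Finset.sum_add_distrib, ← Finset.mul_sum,
    Finset.sum_Icc_one_sub_telescope M Φ]
  simp [Φ, hS0, hSM]

theorem relaxationStep_le_relaxationStep {M : ℕ} {𝒮 c : ℝ} {A : ℕ → Set ℝ}
    {S : ℕ → ℝ → ℝ → ℝ} (hS : ∀ k ≤ M, FluxBounds 𝒮 (A k) (A (k + 1)) (S k)) (hc : 0 ≤ c)
    (hc𝒮 : c * (2 * 𝒮) ≤ 1) {p q : ℕ → ℝ} (hp : p ∈ univ.pi A) (hq : q ∈ univ.pi A)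
    (hqp : q ≤ p) {j : ℕ} (hj : j ∈ Finset.Icc 1 M) :
    relaxationStep S c q j ≤ relaxationStep S c p j := by
  obtain ⟨hj1, hjM⟩ := Finset.mem_Icc.1 hj
  have hF := hS (j - 1) (by omega)
  rw [Nat.sub_add_cancel hj1] at hF
  exact hF.lane_update_le (hS j hjM) hc hc𝒮 (hq _ trivial) (hp _ trivial) (hq _ trivial)
    (hp _ trivial) (hq _ trivial) (hp _ trivial) (hqp _) (hqp _) (hqp _)

theorem measurable_relaxationStep {M : ℕ} {S : ℕ → ℝ → ℝ → ℝ} (hS0 : ∀ u w, S 0 u w = 0)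
    (hSM : ∀ u w, S M u w = 0)
    (hSC1 : ∀ j, 1 ≤ j → j ≤ M - 1 → ContDiff ℝ 1 (Function.uncurry (S j))) (c : ℝ)
    {f : ℝ → ℕ → ℝ} (hf : ∀ j, 1 ≤ j → j ≤ M → Measurable fun x => f x j) {j : ℕ}
    (hj : j ∈ Finset.Icc 1 M) : Measurable fun x => relaxationStep S c (f x) j := by
  have hflux : ∀ k ≤ M, Measurable fun x => S k (f x k) (f x (k + 1)) := by
    intro k hk
    rcases Nat.eq_zero_or_pos k with rfl | hk0
    · simp only [hS0, measurable_const]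
    rcases hk.eq_or_lt with rfl | hkM
    · simp only [hSM, measurable_const]
    exact (hSC1 k hk0 (by omega)).continuous.measurable.comp
      ((hf k hk0 hk).prodMk (hf (k + 1) (by omega) (by omega)))
  obtain ⟨hj1, hjM⟩ := Finset.mem_Icc.1 hj
  have hleft := hflux (j - 1) (by omega)
  rw [Nat.sub_add_cancel hj1] at hleft
  exact (hf j hj1 hjM).add ((hleft.sub (hflux j hjM)).const_mul c)

/-- The admissible densities of lane `k`; the ghost lanes `0` and `M + 1`, whose values only
enter through the vanishing fluxes `S 0` and `S M`, are unconstrained. -/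
def laneBox (M : ℕ) (R : ℕ → ℝ) (k : ℕ) : Set ℝ :=
  if 1 ≤ k ∧ k ≤ M then Icc 0 (R k) else univ

theorem laneBox_of_le {M k : ℕ} (R : ℕ → ℝ) (hk1 : 1 ≤ k) (hkM : k ≤ M) :
    laneBox M R k = Icc 0 (R k) :=
  if_pos ⟨hk1, hkM⟩

theorem mem_pi_laneBox {M : ℕ} {R : ℕ → ℝ} {p : ℕ → ℝ}
    (hp : ∀ j, 1 ≤ j → j ≤ M → p j ∈ Icc 0 (R j)) : p ∈ univ.pi (laneBox M R) := by
  intro k _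
  unfold laneBox
  split_ifs with hk
  exacts [hp k hk.1 hk.2, mem_univ _]

theorem fluxBounds_laneBox {M : ℕ} {R : ℕ → ℝ} {𝒮 : ℝ} (h𝒮 : 0 ≤ 𝒮) {S : ℕ → ℝ → ℝ → ℝ}
    (hS0 : ∀ u w, S 0 u w = 0) (hSM : ∀ u w, S M u w = 0)
    (hSC1 : ∀ j, 1 ≤ j → j ≤ M - 1 → ContDiff ℝ 1 (Function.uncurry (S j)))
    (hS1 : ∀ j, 1 ≤ j → j ≤ M - 1 → ∀ u ∈ Icc (0:ℝ) (R j), ∀ w ∈ Icc (0:ℝ) (R (j+1)),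
      deriv (fun u' => S j u' w) u ∈ Icc (0:ℝ) 𝒮)
    (hS2 : ∀ j, 1 ≤ j → j ≤ M - 1 → ∀ u ∈ Icc (0:ℝ) (R j), ∀ w ∈ Icc (0:ℝ) (R (j+1)),
      deriv (fun w' => S j u w') w ∈ Icc (-𝒮) (0:ℝ))
    {k : ℕ} (hk : k ≤ M) : FluxBounds 𝒮 (laneBox M R k) (laneBox M R (k + 1)) (S k) := by
  rcases Nat.eq_zero_or_pos k with rfl | hk0
  · rw [show S 0 = 0 from funext₂ hS0]
    exact FluxBounds.zero h𝒮 _ _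
  rcases hk.eq_or_lt with rfl | hkM
  · rw [show S k = 0 from funext₂ hSM]
    exact FluxBounds.zero h𝒮 _ _
  rw [laneBox_of_le R hk0 hk, laneBox_of_le R (by omega) hkM]
  exact .of_contDiff (convex_Icc _ _) (convex_Icc _ _) (hSC1 k hk0 (by omega))
    (hS1 k hk0 (by omega)) (hS2 k hk0 (by omega))

theorem relaxation_step_L1_contraction_profiles_general
(M : ℕ)
    (R : ℕ → ℝ)
    (𝒮 τ Δt : ℝ) (h𝒮 : 0 < 𝒮) (hτ : 0 < τ) (hΔt : 0 < Δt)
    (hΔtτ : Δt ≤ τ / (2 * 𝒮))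
    (S : ℕ → ℝ → ℝ → ℝ)
    (hS0 : ∀ u w, S 0 u w = 0)
    (hSM : ∀ u w, S M u w = 0)
    (hSC1 : ∀ j, 1 ≤ j → j ≤ M - 1 → ContDiff ℝ 1 (Function.uncurry (S j)))
    (hS1 : ∀ j, 1 ≤ j → j ≤ M - 1 → ∀ u ∈ Icc (0:ℝ) (R j), ∀ w ∈ Icc (0:ℝ) (R (j+1)),
      deriv (fun u' => S j u' w) u ∈ Icc (0:ℝ) 𝒮)
    (hS2 : ∀ j, 1 ≤ j → j ≤ M - 1 → ∀ u ∈ Icc (0:ℝ) (R j), ∀ w ∈ Icc (0:ℝ) (R (j+1)),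
      deriv (fun w' => S j u w') w ∈ Icc (-𝒮) (0:ℝ))
    (g : (ℕ → ℝ) → ℕ → ℝ)
    (hg : ∀ ρ j, g ρ j = S (j-1) (ρ (j-1)) (ρ j) - S j (ρ j) (ρ (j+1)))
    (T : (ℕ → ℝ) → ℕ → ℝ)
    (hT : ∀ ρ j, T ρ j = ρ j + (Δt / τ) * g ρ j)
    (ρ σ : ℝ → ℕ → ℝ)
    (hρbox : ∀ x, ∀ j, 1 ≤ j → j ≤ M → ρ x j ∈ Icc (0:ℝ) (R j))
    (hσbox : ∀ x, ∀ j, 1 ≤ j → j ≤ M → σ x j ∈ Icc (0:ℝ) (R j))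
    (hρmeas : ∀ j, 1 ≤ j → j ≤ M → Measurable (fun x => ρ x j))
    (hσmeas : ∀ j, 1 ≤ j → j ≤ M → Measurable (fun x => σ x j))
    (hint : ∀ j, 1 ≤ j → j ≤ M → Integrable (fun x => ρ x j - σ x j)) :
    ∑ j ∈ Finset.Icc 1 M, ∫ x : ℝ, |T (ρ x) j - T (σ x) j|
      ≤ ∑ j ∈ Finset.Icc 1 M, ∫ x : ℝ, |ρ x j - σ x j| := by
  have hc : 0 ≤ Δt / τ := by positivity
  have hc𝒮 : Δt / τ * (2 * 𝒮) ≤ 1 := by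
    rw [div_mul_eq_mul_div, div_le_one hτ]
    rwa [le_div_iff₀ (by positivity)] at hΔtτ
  obtain rfl : T = relaxationStep S (Δt / τ) := by
    funext p j
    rw [hT, hg, relaxationStep]
  have hmono : ∀ p ∈ univ.pi (laneBox M R), ∀ q ∈ univ.pi (laneBox M R), q ≤ p →
      ∀ j ∈ Finset.Icc 1 M, relaxationStep S (Δt / τ) q j ≤ relaxationStep S (Δt / τ) p j :=
    fun p hp q hq hqp _ hj => relaxationStep_le_relaxationStep (A := laneBox M R)
      (fun _ hk => fluxBounds_laneBox h𝒮.le hS0 hSM hSC1 hS1 hS2 hk) hc hc𝒮 hp hq hqp hj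
  refine sum_integral_abs_le_of_sum_abs_le _ (fun j hj => ?_) (fun j hj => ?_) fun x =>
    sum_abs_sub_le_of_monotone_of_sum_eq _ (infClosed_pi fun _ _ => LinearOrder.infClosed _)
      hmono (fun p _ => sum_relaxationStep hS0 hSM _ p) (mem_pi_laneBox (hρbox x))
      (mem_pi_laneBox (hσbox x))
  · exact ((measurable_relaxationStep hS0 hSM hSC1 _ hρmeas hj).sub
      (measurable_relaxationStep hS0 hSM hSC1 _ hσmeas hj)).aestronglyMeasurable
  · exact hint j (Finset.mem_Icc.1 hj).1 (Finset.mem_Icc.1 hj).2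

/-- L¹ stability estimate (FL2) in the proof of Lemma 3.2: the relaxation step
is an L¹-contraction between density profiles. -/
theorem relaxation_step_L1_contraction_profiles
(M : ℕ) (hM : 1 ≤ M)
    (R : ℕ → ℝ) (hR : ∀ j, 1 ≤ j → j ≤ M → 0 < R j)
    (𝒮 τ Δt : ℝ) (h𝒮 : 0 < 𝒮) (hτ : 0 < τ) (hΔt : 0 < Δt)
    (hΔtτ : Δt ≤ τ / (2 * 𝒮))
    (S : ℕ → ℝ → ℝ → ℝ)
    (hS0 : ∀ u w, S 0 u w = 0)
    (hSM : ∀ u w, S M u w = 0)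
    (hSC1 : ∀ j, 1 ≤ j → j ≤ M - 1 → ContDiff ℝ 1 (Function.uncurry (S j)))
    (hS1 : ∀ j, 1 ≤ j → j ≤ M - 1 → ∀ u ∈ Icc (0:ℝ) (R j), ∀ w ∈ Icc (0:ℝ) (R (j+1)),
      deriv (fun u' => S j u' w) u ∈ Icc (0:ℝ) 𝒮)
    (hS2 : ∀ j, 1 ≤ j → j ≤ M - 1 → ∀ u ∈ Icc (0:ℝ) (R j), ∀ w ∈ Icc (0:ℝ) (R (j+1)),
      deriv (fun w' => S j u w') w ∈ Icc (-𝒮) (0:ℝ))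
    (hS00 : ∀ j, 1 ≤ j → j ≤ M - 1 → S j 0 0 = 0)
    (hSRR : ∀ j, 1 ≤ j → j ≤ M - 1 → S j (R j) (R (j+1)) = 0)
    (g : (ℕ → ℝ) → ℕ → ℝ)
    (hg : ∀ ρ j, g ρ j = S (j-1) (ρ (j-1)) (ρ j) - S j (ρ j) (ρ (j+1)))
    (T : (ℕ → ℝ) → ℕ → ℝ)
    (hT : ∀ ρ j, T ρ j = ρ j + (Δt / τ) * g ρ j)
    (ρ σ : ℝ → ℕ → ℝ)
    (hρbox : ∀ x, ∀ j, 1 ≤ j → j ≤ M → ρ x j ∈ Icc (0:ℝ) (R j))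
    (hσbox : ∀ x, ∀ j, 1 ≤ j → j ≤ M → σ x j ∈ Icc (0:ℝ) (R j))
    (hρmeas : ∀ j, 1 ≤ j → j ≤ M → Measurable (fun x => ρ x j))
    (hσmeas : ∀ j, 1 ≤ j → j ≤ M → Measurable (fun x => σ x j))
    (hint : ∀ j, 1 ≤ j → j ≤ M → Integrable (fun x => ρ x j - σ x j)) :
    ∑ j ∈ Finset.Icc 1 M, ∫ x : ℝ, |T (ρ x) j - T (σ x) j|
      ≤ ∑ j ∈ Finset.Icc 1 M, ∫ x : ℝ, |ρ x j - σ x j| :=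
  relaxation_step_L1_contraction_profiles_general M R 𝒮 τ Δt h𝒮 hτ hΔt hΔtτ S hS0 hSM hSC1 hS1 hS2 g
    hg T hT ρ σ hρbox hσbox hρmeas hσmeas hint
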